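/- arXiv:2410.20366 — 2 statements merged into one kernel-verified Lean document; each statement's English description precedes it below -/
import Mathlib

section
/- Let A be a two-block SBM adjacency matrix with parameters (N, p). Then for all distinct indices i ≠ j lying in the same community, E[(A³)_{ij}] = (N−2)(N−3)p³ + N(3N−5)p(1−p)² + p + 2(N−2)p² + 2Np(1−p). -/
open MeasureTheory ProbabilityTheory Matrix

/-- `i` and `j` lie in the same community, where the communities of `Fin (2*N)` are
`{0, …, N-1}` and `{N, …, 2N-1}`. -/
def sameCom (N : ℕ) (i j : Fin (2 * N)) : Prop := ((i : ℕ) < N ↔ (j : ℕ) < N)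

instance (N : ℕ) (i j : Fin (2 * N)) : Decidable (sameCom N i j) := by
  unfold sameCom; infer_instance

/-- The Bernoulli distribution on `ℝ` with success probability `q`:
mass `q` at `1` and mass `1 - q` at `0`. -/
noncomputable def bernoulliReal (q : ℝ) : Measure ℝ :=
  ENNReal.ofReal q • Measure.dirac (1 : ℝ) + ENNReal.ofReal (1 - q) • Measure.dirac (0 : ℝ)

/-- `A` is a two-block SBM adjacency matrix with parameters `(N, p)` under the measure `μ`. -/
structure IsSBM {Ω : Type*} [MeasurableSpace Ω] (μ : Measure Ω) (N : ℕ) (p : ℝ)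
    (A : Ω → Matrix (Fin (2 * N)) (Fin (2 * N)) ℝ) : Prop where
  isProb : IsProbabilityMeasure μ
  symm : ∀ ω, (A ω)ᵀ = A ω
  diag : ∀ ω i, A ω i i = 0
  vals : ∀ ω i j, A ω i j = 0 ∨ A ω i j = 1
  meas : ∀ i j, Measurable fun ω => A ω i j
  indep : iIndepFun
    (fun (e : {e : Fin (2 * N) × Fin (2 * N) // e.1 < e.2}) ω => A ω e.1.1 e.1.2) μ
  bern : ∀ i j, i < j →
    μ.map (fun ω => A ω i j) = bernoulliReal (if sameCom N i j then p else 1 - p)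

/-! Expand `(A³)ᵢⱼ = ∑ₖ ∑ₗ Aᵢₖ Aₖₗ Aₗⱼ`. The three edges of a walk are independent unless the
walk traverses an edge twice, and since the entries are `0`/`1` a repeated factor can be
dropped, so `E[(A³)ᵢⱼ]` is `(M³)ᵢⱼ` for the mean matrix `M` plus corrections from the walks
`i k i j`, `i j l j` and `i j i j`. For the SBM, `M = Q - p • 1` where `Q` is the block matrix of
edge probabilities; `Q` only sees communities, so its powers follow from each community
having `N` vertices. -/

open Finset

lemma Matrix.pow_three_apply {n R : Type*} [Fintype n] [DecidableEq n] [Semiring R]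
    (B : Matrix n n R) (i j : n) : (B ^ 3) i j = ∑ k, ∑ l, B i k * B k l * B l j := by
  simp only [pow_three, mul_apply, Finset.mul_sum, mul_assoc]

lemma pow_three_sub_smul_one {R B : Type*} [CommRing R] [Ring B] [Algebra R B] (a : B) (c : R) :
    (a - c • 1) ^ 3 = a ^ 3 - (3 * c) • a ^ 2 + (3 * c ^ 2) • a - c ^ 3 • 1 := by
  simp only [pow_three, pow_two, sub_mul, mul_sub, smul_mul_assoc, mul_smul_comm, one_mul,
    mul_one]
  module

section IndepEdges

variable {Ω V : Type*} [MeasurableSpace Ω] [LinearOrder V]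

structure IsIndepEdgeAdj (μ : Measure Ω) (A : Ω → Matrix V V ℝ) : Prop where
  isProb : IsProbabilityMeasure μ
  symm : ∀ ω, (A ω)ᵀ = A ω
  diag : ∀ ω i, A ω i i = 0
  vals : ∀ ω i j, A ω i j = 0 ∨ A ω i j = 1
  meas : ∀ i j, Measurable fun ω => A ω i j
  indep : iIndepFun (fun (e : {e : V × V // e.1 < e.2}) ω => A ω e.1.1 e.1.2) μ

noncomputable def expectedAdj (μ : Measure Ω) (A : Ω → Matrix V V ℝ) : Matrix V V ℝ :=
  Matrix.of fun a b => ∫ ω, A ω a b ∂μ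

def edge (a b : V) (h : a ≠ b) : {e : V × V // e.1 < e.2} :=
  ⟨(min a b, max a b), min_lt_max.2 h⟩

lemma edge_eq_edge_iff {a b c d : V} (hab : a ≠ b) (hcd : c ≠ d) :
    edge a b hab = edge c d hcd ↔ (a = c ∧ b = d) ∨ (a = d ∧ b = c) := by
  rcases lt_or_gt_of_ne hab with h | h <;> rcases lt_or_gt_of_ne hcd with h' | h' <;>
    simp [edge, Subtype.ext_iff, h.le, h'.le] <;> grind

variable {μ : Measure Ω} {A : Ω → Matrix V V ℝ}

namespace IsIndepEdgeAdj

lemma apply_comm (hA : IsIndepEdgeAdj μ A) (ω : Ω) (a b : V) : A ω a b = A ω b a := by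
  conv_lhs => rw [← hA.symm ω]
  rfl

lemma mul_self_apply (hA : IsIndepEdgeAdj μ A) (ω : Ω) (a b : V) :
    A ω a b * A ω a b = A ω a b := by
  rcases hA.vals ω a b with h | h <;> simp [h]

lemma norm_apply_le_one (hA : IsIndepEdgeAdj μ A) (ω : Ω) (a b : V) : ‖A ω a b‖ ≤ 1 := by
  rcases hA.vals ω a b with h | h <;> simp [h]

lemma apply_eq_edge (hA : IsIndepEdgeAdj μ A) {a b : V} (h : a ≠ b) :
    (fun ω => A ω a b) = fun ω => A ω (edge a b h).1.1 (edge a b h).1.2 := by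
  funext ω
  rcases le_total a b with h' | h'
  · simp [edge, h']
  · simp [edge, h', hA.apply_comm ω a b]

lemma integral_mul_of_edge_ne (hA : IsIndepEdgeAdj μ A) {a b c d : V} (hab : a ≠ b)
    (hcd : c ≠ d) (hne : edge a b hab ≠ edge c d hcd) :
    ∫ ω, A ω a b * A ω c d ∂μ = expectedAdj μ A a b * expectedAdj μ A c d := by
  have hind : IndepFun (fun ω => A ω a b) (fun ω => A ω c d) μ := by
    rw [hA.apply_eq_edge hab, hA.apply_eq_edge hcd]
    exact hA.indep.indepFun hne
  exact hind.integral_mul_eq_mul_integral (hA.meas a b).aestronglyMeasurable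
    (hA.meas c d).aestronglyMeasurable

lemma integral_mul_mul_of_edge_ne (hA : IsIndepEdgeAdj μ A) {a b c d e f : V} (hab : a ≠ b)
    (hcd : c ≠ d) (hef : e ≠ f) (h₁₂ : edge a b hab ≠ edge c d hcd)
    (h₁₃ : edge a b hab ≠ edge e f hef) (h₂₃ : edge c d hcd ≠ edge e f hef) :
    ∫ ω, A ω a b * A ω c d * A ω e f ∂μ =
      expectedAdj μ A a b * expectedAdj μ A c d * expectedAdj μ A e f := by
  have hind : IndepFun ((fun ω => A ω a b) * fun ω => A ω c d) (fun ω => A ω e f) μ := by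
    rw [hA.apply_eq_edge hab, hA.apply_eq_edge hcd, hA.apply_eq_edge hef]
    exact hA.indep.indepFun_mul_left (fun e => hA.meas _ _) _ _ _ h₁₃ h₂₃
  rw [← hA.integral_mul_of_edge_ne hab hcd h₁₂]
  exact hind.integral_mul_eq_mul_integral
    ((hA.meas a b).mul (hA.meas c d)).aestronglyMeasurable (hA.meas e f).aestronglyMeasurable

lemma integrable_mul_mul (hA : IsIndepEdgeAdj μ A) (a b c d e f : V) :
    Integrable (fun ω => A ω a b * A ω c d * A ω e f) μ := by
  have := hA.isProb
  refine .of_bound (((hA.meas a b).mul (hA.meas c d)).mul (hA.meas e f)).aestronglyMeasurable 1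
    (ae_of_all _ fun ω => ?_)
  simp only [norm_mul]
  exact mul_le_one₀ (mul_le_one₀ (hA.norm_apply_le_one ω a b) (norm_nonneg _)
    (hA.norm_apply_le_one ω c d)) (norm_nonneg _) (hA.norm_apply_le_one ω e f)

lemma expectedAdj_self (hA : IsIndepEdgeAdj μ A) (a : V) : expectedAdj μ A a a = 0 := by
  simp [expectedAdj, hA.diag]

lemma expectedAdj_comm (hA : IsIndepEdgeAdj μ A) (a b : V) :
    expectedAdj μ A a b = expectedAdj μ A b a := by
  simp only [expectedAdj, of_apply, hA.apply_comm _ a b]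

lemma integral_walk_three (hA : IsIndepEdgeAdj μ A) {i j : V} (hij : i ≠ j) (k l : V) :
    ∫ ω, A ω i k * A ω k l * A ω l j ∂μ =
      expectedAdj μ A i k * expectedAdj μ A k l * expectedAdj μ A l j
        + (if l = i then expectedAdj μ A i j * (expectedAdj μ A i k * (1 - expectedAdj μ A i k))
            else 0)
        + (if k = j then expectedAdj μ A i j * (expectedAdj μ A j l * (1 - expectedAdj μ A j l))
            else 0)
        + (if k = j ∧ l = i then expectedAdj μ A i j * (1 - expectedAdj μ A i j) ^ 2 else 0) := by
  have hM := hA.expectedAdj_self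
  by_cases hki : k = i
  · simp [hki, hA.diag, hM, hij]
  by_cases hlj : l = j
  · simp [hlj, hA.diag, hM, Ne.symm hij]
  by_cases hkl : k = l
  · rw [hkl] at hki
    simp [hkl, hA.diag, hM, hki, hlj]
  by_cases hkj : k = j <;> by_cases hli : l = i
  · have hA3 : ∀ ω, A ω i j * A ω j i * A ω i j = A ω i j := fun ω => by
      rw [hA.apply_comm ω j i, hA.mul_self_apply, hA.mul_self_apply]
    simp only [hkj, hli, hA3, if_true, and_self, hA.expectedAdj_comm j i]
    change expectedAdj μ A i j = _
    ring
  · have hA3 : ∀ ω, A ω i j * A ω j l * A ω l j = A ω i j * A ω j l := fun ω => by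
      rw [mul_assoc, hA.apply_comm ω l j, hA.mul_self_apply]
    rw [hkj] at hkl ⊢
    simp only [hA3, hli, if_true, if_false, and_false, hA.integral_mul_of_edge_ne hij hkl
      (by rw [Ne, edge_eq_edge_iff]; tauto), hA.expectedAdj_comm l j]
    ring
  · have hA3 : ∀ ω, A ω i k * A ω k i * A ω i j = A ω i k * A ω i j := fun ω => by
      rw [hA.apply_comm ω k i, hA.mul_self_apply]
    rw [hli] at hkl ⊢
    simp only [hA3, hkj, if_true, if_false, false_and, hA.integral_mul_of_edge_ne (Ne.symm hki)
      hij (by rw [Ne, edge_eq_edge_iff]; tauto), hA.expectedAdj_comm k i]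
    ring
  · rw [hA.integral_mul_mul_of_edge_ne (Ne.symm hki) hkl hlj (by rw [Ne, edge_eq_edge_iff]; tauto)
      (by rw [Ne, edge_eq_edge_iff]; tauto) (by rw [Ne, edge_eq_edge_iff]; tauto)]
    simp [hkj, hli]

theorem integral_pow_three_apply [Fintype V] (hA : IsIndepEdgeAdj μ A) {i j : V} (hij : i ≠ j) :
    ∫ ω, (A ω ^ 3) i j ∂μ =
      (expectedAdj μ A ^ 3) i j
        + expectedAdj μ A i j * ∑ k, (expectedAdj μ A i k * (1 - expectedAdj μ A i k)
            + expectedAdj μ A j k * (1 - expectedAdj μ A j k))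
        + expectedAdj μ A i j * (1 - expectedAdj μ A i j) ^ 2 := by
  have hint (k l : V) := hA.integrable_mul_mul i k k l l j
  calc ∫ ω, (A ω ^ 3) i j ∂μ = ∑ k, ∑ l, ∫ ω, A ω i k * A ω k l * A ω l j ∂μ := by
        simp only [pow_three_apply]
        rw [integral_finsetSum _ fun k _ => integrable_finsetSum _ fun l _ => hint k l]
        exact Finset.sum_congr rfl fun k _ => integral_finsetSum _ fun l _ => hint k l
    _ = _ := by
        simp only [hA.integral_walk_three hij, Finset.sum_add_distrib, pow_three_apply]
        simp only [sum_ite_eq', mem_univ, if_true, ← mul_sum, sum_ite_irrel, sum_const_zero,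
          ite_and, add_left_inj]
        ring

end IsIndepEdgeAdj

end IndepEdges

lemma integral_bernoulliReal {q : ℝ} (hq : 0 ≤ q) : ∫ x, x ∂(bernoulliReal q) = q := by
  have hint (c : ENNReal) (a : ℝ) (hc : c ≠ ⊤) :
      Integrable (fun x : ℝ => x) (c • Measure.dirac a) :=
    (integrable_dirac (by simp)).smul_measure hc
  rw [bernoulliReal, integral_add_measure (hint _ _ ENNReal.ofReal_ne_top)
    (hint _ _ ENNReal.ofReal_ne_top)]
  simp [hq]

section Communities

variable {N : ℕ}

lemma card_val_lt : #{k : Fin (2 * N) | (k : ℕ) < N} = N := by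
  rw [Fin.card_filter_val_lt]; omega

lemma card_not_val_lt : #{k : Fin (2 * N) | ¬ (k : ℕ) < N} = N := by
  have h := card_filter_add_card_filter_not (s := (univ : Finset (Fin (2 * N))))
    fun k => (k : ℕ) < N
  rw [card_val_lt, card_univ, Fintype.card_fin] at h
  omega

lemma card_sameCom (v : Fin (2 * N)) : #{k | sameCom N v k} = N := by
  by_cases hv : (v : ℕ) < N <;>
    simp only [sameCom, hv, true_iff, false_iff, card_val_lt, card_not_val_lt]

lemma card_not_sameCom (v : Fin (2 * N)) : #{k | ¬ sameCom N v k} = N := by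
  by_cases hv : (v : ℕ) < N <;>
    simp only [sameCom, hv, true_iff, false_iff, not_not, card_val_lt, card_not_val_lt]

lemma sum_ite_sameCom (v : Fin (2 * N)) (x y : ℝ) :
    ∑ k, (if sameCom N v k then x else y) = N * x + N * y := by
  rw [Finset.sum_ite, sum_const, sum_const, card_sameCom, card_not_sameCom, nsmul_eq_mul,
    nsmul_eq_mul]

noncomputable def blockProb (N : ℕ) (p : ℝ) : Matrix (Fin (2 * N)) (Fin (2 * N)) ℝ :=
  Matrix.of fun a b => if sameCom N a b then p else 1 - p

variable {p : ℝ}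

lemma blockProb_apply_of_sameCom {a b : Fin (2 * N)} (h : sameCom N a b) :
    blockProb N p a b = p :=
  if_pos h

lemma sum_blockProb_mul_ite (a b : Fin (2 * N)) (x y : ℝ) :
    ∑ k, blockProb N p a k * (if sameCom N k b then x else y) =
      if sameCom N a b then N * (p * x + (1 - p) * y) else N * (p * y + (1 - p) * x) := by
  have h (k) : blockProb N p a k * (if sameCom N k b then x else y) =
      if sameCom N a k then p * (if sameCom N a b then x else y)
      else (1 - p) * (if sameCom N a b then y else x) := by
    by_cases ha : (a : ℕ) < N <;> by_cases hk : (k : ℕ) < N <;> by_cases hb : (b : ℕ) < N <;>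
      simp [blockProb, sameCom, ha, hk, hb]
  simp only [h, sum_ite_sameCom]
  split_ifs <;> ring

lemma blockProb_sq_apply (a b : Fin (2 * N)) :
    (blockProb N p ^ 2) a b =
      if sameCom N a b then N * (p ^ 2 + (1 - p) ^ 2) else N * (2 * p * (1 - p)) := by
  rw [sq, mul_apply]
  exact (sum_blockProb_mul_ite a b p (1 - p)).trans (by split_ifs <;> ring)

lemma blockProb_pow_three_apply {i j : Fin (2 * N)} (hij : sameCom N i j) :
    (blockProb N p ^ 3) i j =
      N * (p * (N * (p ^ 2 + (1 - p) ^ 2)) + (1 - p) * (N * (2 * p * (1 - p)))) := by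
  rw [pow_succ', mul_apply]
  simp only [blockProb_sq_apply, sum_blockProb_mul_ite, if_pos hij]

lemma sum_mul_one_sub_blockProb_sub_smul_one (a : Fin (2 * N)) :
    ∑ k, (blockProb N p - p • 1) a k * (1 - (blockProb N p - p • 1) a k) =
      (2 * N - 1) * (p * (1 - p)) := by
  have h (k) : (blockProb N p - p • 1) a k * (1 - (blockProb N p - p • 1) a k) =
      p * (1 - p) - if a = k then p * (1 - p) else 0 := by
    by_cases hak : a = k
    · simp [hak, blockProb, sameCom]
    · simp only [Matrix.sub_apply, Matrix.smul_apply, one_apply_ne hak, blockProb, of_apply,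
        smul_zero, sub_zero, hak, if_false]
      split_ifs <;> ring
  rw [Finset.sum_congr rfl fun k _ => h k, Finset.sum_sub_distrib]
  simp only [sum_const, card_univ, Fintype.card_fin, nsmul_eq_mul, Nat.cast_mul, Nat.cast_ofNat,
    sum_ite_eq, mem_univ, if_true]
  ring

end Communities

namespace IsSBM

variable {Ω : Type*} [MeasurableSpace Ω] {μ : Measure Ω} {N : ℕ} {p : ℝ}
  {A : Ω → Matrix (Fin (2 * N)) (Fin (2 * N)) ℝ}

lemma isIndepEdgeAdj (hA : IsSBM μ N p A) : IsIndepEdgeAdj μ A :=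
  ⟨hA.isProb, hA.symm, hA.diag, hA.vals, hA.meas, hA.indep⟩

lemma expectedAdj_eq (hA : IsSBM μ N p A) (hp0 : 0 ≤ p) (hp1 : p ≤ 1) :
    expectedAdj μ A = blockProb N p - p • 1 := by
  have hlt {a b : Fin (2 * N)} (hab : a < b) : expectedAdj μ A a b = blockProb N p a b := by
    calc ∫ ω, A ω a b ∂μ = ∫ x, x ∂(μ.map fun ω => A ω a b) :=
          (integral_map (hA.meas a b).aemeasurable aestronglyMeasurable_id).symm
      _ = blockProb N p a b := by
          rw [hA.bern a b hab, integral_bernoulliReal (by split_ifs <;> linarith)]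
          rfl
  ext a b
  rcases lt_trichotomy a b with hab | rfl | hab
  · simp [hlt hab, hab.ne]
  · simp [hA.isIndepEdgeAdj.expectedAdj_self, blockProb, sameCom]
  · rw [hA.isIndepEdgeAdj.expectedAdj_comm, hlt hab]
    simp [blockProb, sameCom, one_apply_ne hab.ne', iff_comm]

end IsSBM

theorem stmt7_general {Ω : Type*} [MeasurableSpace Ω] (μ : Measure Ω) (N : ℕ)
    (p : ℝ) (hp : 1 / 2 < p) (hp1 : p ≤ 1)
    (A : Ω → Matrix (Fin (2 * N)) (Fin (2 * N)) ℝ) (hA : IsSBM μ N p A)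
    (i j : Fin (2 * N)) (hij : i ≠ j) (hcom : sameCom N i j) :
    (∫ ω, ((A ω) ^ 3) i j ∂μ) =
      ((N : ℝ) - 2) * ((N : ℝ) - 3) * p ^ 3 + (N : ℝ) * (3 * N - 5) * p * (1 - p) ^ 2
        + p + 2 * ((N : ℝ) - 2) * p ^ 2 + 2 * N * p * (1 - p) := by
  rw [hA.isIndepEdgeAdj.integral_pow_three_apply hij, hA.expectedAdj_eq (by linarith) hp1,
    pow_three_sub_smul_one, Finset.sum_add_distrib, sum_mul_one_sub_blockProb_sub_smul_one,
    sum_mul_one_sub_blockProb_sub_smul_one]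
  simp only [Matrix.add_apply, Matrix.sub_apply, Matrix.smul_apply, one_apply_ne hij,
    blockProb_pow_three_apply hcom, blockProb_sq_apply, blockProb_apply_of_sameCom hcom,
    if_pos hcom, smul_eq_mul, mul_zero, sub_zero]
  ring

theorem stmt7 {Ω : Type*} [MeasurableSpace Ω] (μ : Measure Ω) (N : ℕ) (hN : 1 ≤ N)
    (p : ℝ) (hp : 1 / 2 < p) (hp1 : p ≤ 1)
    (A : Ω → Matrix (Fin (2 * N)) (Fin (2 * N)) ℝ) (hA : IsSBM μ N p A)
    (i j : Fin (2 * N)) (hij : i ≠ j) (hcom : sameCom N i j) :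
    (∫ ω, ((A ω) ^ 3) i j ∂μ) =
      ((N : ℝ) - 2) * ((N : ℝ) - 3) * p ^ 3 + (N : ℝ) * (3 * N - 5) * p * (1 - p) ^ 2
        + p + 2 * ((N : ℝ) - 2) * p ^ 2 + 2 * N * p * (1 - p) :=
  stmt7_general μ N p hp hp1 A hA i j hij hcom
end

section
/- For every integer N ≥ 4 and every real p with 1/2 < p < 1, c(N, p) > 0 (and c(N, 1) = 0). -/
/-- The coefficient `a(N, p)`. -/
noncomputable def aCoef (N : ℕ) (p : ℝ) : ℝ :=
  3 * ((N : ℝ) - 2) * ((N : ℝ) - 3) * p ^ 4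
    + 2 * (N : ℝ) * (4 * (N : ℝ) - 6) * p * (1 - p) ^ 2
    + (N : ℝ) * ((N : ℝ) - 1) * (1 - p) ^ 4

/-- The coefficient `b(N, p)`. -/
noncomputable def bCoef (N : ℕ) (p : ℝ) : ℝ :=
  (N : ℝ) ^ 3 * (1 - 4 * p + 12 * p ^ 2 - 16 * p ^ 3 + 8 * p ^ 4)
    + (N : ℝ) ^ 2 * (-3 + 9 * p - 34 * p ^ 2 + 52 * p ^ 3 - 34 * p ^ 4)
    + (N : ℝ) * (2 - 3 * p + 22 * p ^ 2 - 38 * p ^ 3 + 48 * p ^ 4)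
    - 6 * p ^ 3 * (1 + 4 * p)

/-- The coefficient `c(N, p)`. -/
noncomputable def cCoef (N : ℕ) (p : ℝ) : ℝ :=
  ((N : ℝ) - 1) * p ^ 2 * (1 - p) * (4 * ((N : ℝ) - 2) ^ 2 * p - 3 * (N : ℝ) + 5)
    + ((N : ℝ) - 1) * (1 - p) ^ 3 * (4 * ((N : ℝ) - 2) ^ 2 * p - (N : ℝ) + 1)

theorem stmt15 (N : ℕ) (hN : 4 ≤ N) :
    (∀ p : ℝ, 1 / 2 < p → p < 1 → 0 < cCoef N p) ∧ cCoef N 1 = 0 := by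
  have hN4 : (4 : ℝ) ≤ (N : ℝ) := by exact_mod_cast hN
  constructor
  · intro p hp1 hp2
    unfold cCoef
    have h1 : (0:ℝ) < (N : ℝ) - 1 := by linarith
    have h2 : (0:ℝ) < 1 - p := by linarith
    have hfac : (0:ℝ) < 4 * ((N : ℝ) - 2) ^ 2 * p - 3 * (N : ℝ) + 5 := by
      nlinarith [sq_nonneg ((N:ℝ) - 4), sq_nonneg ((N:ℝ) - 2)]
    have hfac2 : (0:ℝ) < 4 * ((N : ℝ) - 2) ^ 2 * p - (N : ℝ) + 1 := by linarith
    have hp0 : (0:ℝ) < p := by linarith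
    have t1 := mul_pos (mul_pos (mul_pos h1 (pow_pos hp0 2)) h2) hfac
    have t2 := mul_pos (mul_pos h1 (pow_pos h2 3)) hfac2
    nlinarith [t1, t2]
  · unfold cCoef; ring
end
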